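/- arXiv:1805.06748 — 3 statements merged into one kernel-verified Lean document; each statement's English description precedes it below -/
import Mathlib

section
/- For n ≥ 2, the kernel of the homomorphism ε: W_n → {±1} sending each generator s_i to -1 is a free group of rank n-1, with basis {x_i := s_i s_{i+1} | i = 1, ..., n-1}. -/
/-- The relations of the universal Coxeter group of rank `n`. -/
def univCoxeterRels (n : ℕ) : Set (FreeGroup (Fin n)) :=
  {r | ∃ i : Fin n, r = (FreeGroup.of i) ^ 2}

/-- The universal Coxeter group `Wₙ`, the free product of `n` copies of `ℤ/2`. -/
abbrev UnivCoxeterGroup (n : ℕ) := PresentedGroup (univCoxeterRels n)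

/-- The standard generators `sᵢ` of `Wₙ`. -/
def ucs {n : ℕ} (i : Fin n) : UnivCoxeterGroup n := PresentedGroup.of i

/-!
Put `t = s_{n-1}`. Sending `sᵢ ↦ (aᵢ, -1)`, with `a_{n-1} = 1`, is an isomorphism of `Wₙ`
onto `F(a₀, …, a_{n-2}) ⋊ {±1}`, where `-1` inverts every generator `aᵢ`; the inverse sends
`aᵢ ↦ sᵢ t` and `-1 ↦ t`. It turns `ε` into the projection onto `{±1}`, so `ker ε` is free
on the `sᵢ t`. Since `sᵢ s_{i+1} = (sᵢ t)(s_{i+1} t)⁻¹`, the basis `xᵢ` is the image of the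
`aᵢ` under the automorphism `aᵢ ↦ aᵢ a_{i+1}⁻¹` of the free group, whose inverse is
`aᵢ ↦ aᵢ a_{i+1} ⋯ a_{n-2}`.
-/

section IntUnits

variable {G : Type*} [Group G]

def intUnitsHom (g : G) (hg : g * g = 1) : ℤˣ →* G where
  toFun u := if u = 1 then 1 else g
  map_one' := if_pos rfl
  map_mul' u v := by
    rcases Int.units_eq_one_or u with rfl | rfl <;> rcases Int.units_eq_one_or v with rfl | rfl <;>
      simp [hg]

@[simp] theorem intUnitsHom_neg_one (g : G) (hg : g * g = 1) : intUnitsHom g hg (-1) = g := by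
  simp [intUnitsHom]

theorem intUnits_hom_ext {f f' : ℤˣ →* G} (h : f (-1) = f' (-1)) : f = f' := by
  ext u
  rcases Int.units_eq_one_or u with rfl | rfl
  · simp
  · exact h

end IntUnits

namespace FreeGroup

section InvGens

variable {α : Type*}

def invGensHom : FreeGroup α →* FreeGroup α := lift fun a => (of a)⁻¹

theorem invGensHom_comp_self : (invGensHom (α := α)).comp invGensHom = MonoidHom.id _ :=
  ext_hom _ _ fun a => by simp [invGensHom]

def invGens : MulAut (FreeGroup α) :=
  invGensHom.toMulEquiv invGensHom invGensHom_comp_self invGensHom_comp_self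

@[simp] theorem invGens_of (a : α) : invGens (of a) = (of a)⁻¹ := by
  simp [invGens, invGensHom]

theorem invGens_mul_self : (invGens : MulAut (FreeGroup α)) * invGens = 1 :=
  MulEquiv.ext fun x => DFunLike.congr_fun invGensHom_comp_self x

def invGensAction : ℤˣ →* MulAut (FreeGroup α) := intUnitsHom invGens invGens_mul_self

@[simp] theorem invGensAction_neg_one : invGensAction (-1) = (invGens : MulAut (FreeGroup α)) :=
  intUnitsHom_neg_one _ _

end InvGens

section DiffEquiv

variable {m : ℕ}

def natGen (j : ℕ) : FreeGroup (Fin m) := if h : j < m then of ⟨j, h⟩ else 1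

@[simp] theorem natGen_val (i : Fin m) : natGen i.1 = of i := dif_pos i.2

theorem natGen_of_le {j : ℕ} (h : m ≤ j) : natGen (m := m) j = 1 := dif_neg (by omega)

@[simp] theorem invGens_natGen (j : ℕ) : invGens (natGen (m := m) j) = (natGen j)⁻¹ := by
  unfold natGen; split <;> simp

def tailProd (j : ℕ) : FreeGroup (Fin m) :=
  if j < m then natGen j * tailProd (j + 1) else 1
termination_by m - j

def diffHom : FreeGroup (Fin m) →* FreeGroup (Fin m) :=
  lift fun i => of i * (natGen (i.1 + 1))⁻¹

def tailProdHom : FreeGroup (Fin m) →* FreeGroup (Fin m) := lift fun i => tailProd i.1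

@[simp] theorem diffHom_of (i : Fin m) : diffHom (of i) = of i * (natGen (i.1 + 1))⁻¹ :=
  lift_apply_of

@[simp] theorem tailProdHom_of (i : Fin m) : tailProdHom (of i) = tailProd i.1 := lift_apply_of

theorem diffHom_natGen (j : ℕ) :
    diffHom (natGen (m := m) j) = natGen j * (natGen (j + 1))⁻¹ := by
  by_cases h : j < m
  · rw [show natGen j = of ⟨j, h⟩ from dif_pos h, diffHom_of]
  · rw [natGen_of_le (by omega), natGen_of_le (by omega : m ≤ j + 1), _root_.map_one, inv_one,
      mul_one]

theorem tailProdHom_natGen (j : ℕ) : tailProdHom (natGen (m := m) j) = tailProd j := by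
  by_cases h : j < m
  · rw [show natGen j = of ⟨j, h⟩ from dif_pos h, tailProdHom_of]
  · rw [natGen_of_le (by omega), tailProd, if_neg h, _root_.map_one]

theorem diffHom_tailProd (j : ℕ) : diffHom (tailProd (m := m) j) = natGen j := by
  induction j using tailProd.induct (m := m) with
  | case1 j h ih =>
    rw [tailProd, if_pos h, _root_.map_mul, ih, diffHom_natGen, inv_mul_cancel_right]
  | case2 j h => rw [tailProd, if_neg h, _root_.map_one, natGen_of_le (by omega)]

def diffEquiv : FreeGroup (Fin m) ≃* FreeGroup (Fin m) :=
  diffHom.toMulEquiv tailProdHom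
    (ext_hom _ _ fun i => by
      rw [MonoidHom.comp_apply, diffHom_of, _root_.map_mul, _root_.map_inv, tailProdHom_of,
        tailProdHom_natGen, tailProd, if_pos i.2, mul_inv_cancel_right, natGen_val]
      rfl)
    (ext_hom _ _ fun i => by simpa using diffHom_tailProd (m := m) i.1)

theorem diffEquiv_of (i : Fin m) : diffEquiv (of i) = natGen i.1 * (natGen (i.1 + 1))⁻¹ := by
  simp [diffEquiv]

end DiffEquiv

end FreeGroup

namespace SemidirectProduct

variable {N G H : Type*} [Group N] [Group G] [Group H] {φ : H →* MulAut N}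

def kerEquivOfMulEquiv (e : G ≃* N ⋊[φ] H) (ε : G →* H)
    (he : rightHom.comp e.toMonoidHom = ε) : N ≃* ε.ker where
  toFun x := ⟨e.symm (inl x), by simp [MonoidHom.mem_ker, ← he]⟩
  invFun g := (e g).left
  left_inv x := by simp
  right_inv g := by
    have hg : (e g).right = 1 := by
      simpa [← he] using (MonoidHom.mem_ker.1 g.2)
    have hinl : inl (e g).left = e g := by
      conv_rhs => rw [← inl_left_mul_inr_right (e g), hg, map_one, mul_one]
    ext
    simp [hinl]
  map_mul' x y := by ext; simp

@[simp] theorem coe_kerEquivOfMulEquiv_apply (e : G ≃* N ⋊[φ] H) (ε : G →* H)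
    (he : rightHom.comp e.toMonoidHom = ε) (x : N) :
    (kerEquivOfMulEquiv e ε he x : G) = e.symm (inl x) := rfl

end SemidirectProduct

open FreeGroup (natGen invGensAction)
open SemidirectProduct (inl inr rightHom mk_eq_inl_mul_inr)

namespace UnivCoxeterGroup

variable {n : ℕ}

theorem ucs_mul_self (i : Fin n) : ucs i * ucs i = 1 :=
  (QuotientGroup.eq_one_iff (FreeGroup.of i * FreeGroup.of i)).2 <| by
    simpa [← sq] using Subgroup.subset_normalClosure (s := univCoxeterRels n) ⟨i, rfl⟩

theorem ucs_inv (i : Fin n) : (ucs i)⁻¹ = ucs i :=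
  inv_eq_of_mul_eq_one_right (ucs_mul_self i)

section Lift

variable {G : Type*} [Group G]

def lift (f : Fin n → G) (hf : ∀ i, f i * f i = 1) : UnivCoxeterGroup n →* G :=
  PresentedGroup.toGroup (f := f) <| by
    rintro _ ⟨i, rfl⟩
    simp [sq, hf]

@[simp] theorem lift_ucs (f : Fin n → G) (hf : ∀ i, f i * f i = 1) (i : Fin n) :
    lift f hf (ucs i) = f i :=
  PresentedGroup.toGroup.of _

theorem hom_ext {f f' : UnivCoxeterGroup n →* G} (h : ∀ i, f (ucs i) = f' (ucs i)) : f = f' :=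
  PresentedGroup.ext h

end Lift

def toSemidirect : UnivCoxeterGroup n →* FreeGroup (Fin (n - 1)) ⋊[invGensAction] ℤˣ :=
  lift (fun i => ⟨natGen i.1, -1⟩) fun i => by
    ext <;> simp [SemidirectProduct.mul_left, SemidirectProduct.mul_right]

theorem toSemidirect_ucs (i : Fin n) : toSemidirect (ucs i) = inl (natGen i.1) * inr (-1) := by
  rw [toSemidirect, lift_ucs, mk_eq_inl_mul_inr]

variable (hn : 0 < n)

def lastGen : UnivCoxeterGroup n := ucs ⟨n - 1, by omega⟩

theorem lastGen_mul_self : lastGen hn * lastGen hn = 1 := ucs_mul_self _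

theorem toSemidirect_lastGen : toSemidirect (lastGen hn) = inr (-1) := by
  rw [lastGen, toSemidirect_ucs, FreeGroup.natGen_of_le le_rfl, map_one, one_mul]

def ofSemidirect : FreeGroup (Fin (n - 1)) ⋊[invGensAction] ℤˣ →* UnivCoxeterGroup n :=
  SemidirectProduct.lift (FreeGroup.lift fun i => ucs ⟨i, by omega⟩ * lastGen hn)
    (intUnitsHom (lastGen hn) (lastGen_mul_self hn)) fun u => by
      rcases Int.units_eq_one_or u with rfl | rfl
      · ext; simp
      · ext; simp [mul_assoc, lastGen, ucs_inv, ucs_mul_self]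

theorem ofSemidirect_inl_natGen {j : ℕ} (hj : j < n) :
    ofSemidirect hn (inl (natGen j)) = ucs ⟨j, hj⟩ * lastGen hn := by
  by_cases h : j < n - 1
  · simp [ofSemidirect, natGen, h]
  · obtain rfl : j = n - 1 := by omega
    simp [ofSemidirect, FreeGroup.natGen_of_le le_rfl, lastGen, ucs_mul_self]

theorem ofSemidirect_inr_neg_one : ofSemidirect hn (inr (-1)) = lastGen hn := by
  rw [ofSemidirect, SemidirectProduct.lift_inr, intUnitsHom_neg_one]

def semidirectEquiv : UnivCoxeterGroup n ≃* FreeGroup (Fin (n - 1)) ⋊[invGensAction] ℤˣ :=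
  toSemidirect.toMulEquiv (ofSemidirect hn)
    (hom_ext fun i => by
      simp [toSemidirect_ucs, ofSemidirect_inl_natGen hn i.2, ofSemidirect_inr_neg_one, lastGen,
        mul_assoc, ucs_mul_self])
    (SemidirectProduct.hom_ext
      (FreeGroup.ext_hom _ _ fun i => by
        have h := ofSemidirect_inl_natGen hn (j := i.1) (by omega)
        rw [FreeGroup.natGen_val] at h
        change toSemidirect (ofSemidirect hn (inl (FreeGroup.of i))) = inl (FreeGroup.of i)
        rw [h, map_mul, toSemidirect_ucs, toSemidirect_lastGen, mul_assoc, ← map_mul,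
          Int.units_mul_self, map_one, mul_one, FreeGroup.natGen_val])
      (intUnits_hom_ext <| by simp [ofSemidirect_inr_neg_one, toSemidirect_lastGen]))

@[simp] theorem semidirectEquiv_apply (g : UnivCoxeterGroup n) :
    semidirectEquiv hn g = toSemidirect g := rfl

@[simp] theorem semidirectEquiv_symm_apply (x : FreeGroup (Fin (n - 1)) ⋊[invGensAction] ℤˣ) :
    (semidirectEquiv hn).symm x = ofSemidirect hn x := rfl

end UnivCoxeterGroup

open UnivCoxeterGroup in
/-- For `n ≥ 2`, the kernel of `ε : Wₙ → {±1}`, `ε(sᵢ) = -1`, is a free group of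
rank `n - 1` with basis `xᵢ = sᵢ s_{i+1}`, `i = 1, …, n-1`. -/
theorem univCoxeter_sign_ker_free (n : ℕ) (hn : 2 ≤ n)
    (ε : UnivCoxeterGroup n →* ℤˣ) (hε : ∀ i : Fin n, ε (ucs i) = -1) :
    ∃ e : FreeGroup (Fin (n - 1)) ≃* MonoidHom.ker ε,
      ∀ i : Fin (n - 1),
        ((e (FreeGroup.of i) : MonoidHom.ker ε) : UnivCoxeterGroup n) =
          ucs ⟨i.val, by omega⟩ * ucs ⟨i.val + 1, by omega⟩ := by
  have hn₀ : 0 < n := by omega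
  have hright : rightHom.comp (semidirectEquiv hn₀).toMonoidHom = ε :=
    hom_ext fun i => by simp [toSemidirect_ucs, hε]
  refine ⟨FreeGroup.diffEquiv.trans (SemidirectProduct.kerEquivOfMulEquiv _ ε hright),
    fun i => ?_⟩
  rw [MulEquiv.trans_apply, SemidirectProduct.coe_kerEquivOfMulEquiv_apply,
    FreeGroup.diffEquiv_of, map_mul, map_inv, semidirectEquiv_symm_apply, map_mul, map_inv,
    ofSemidirect_inl_natGen hn₀ (by omega), ofSemidirect_inl_natGen hn₀ (by omega),
    mul_inv_rev, ucs_inv]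
  group
end

section
/- Let G_1, G_2 be groups acting by isometries on a complete CAT(0) space X via homomorphisms φ_1, φ_2 whose images commute elementwise. If G_1 and G_2 each have a global fixed point in X, then the product action of G_1 × G_2 on X (given by (g_1,g_2) ↦ φ_1(g_1)∘φ_2(g_2)) has a global fixed point. -/
/-!
The circumradius `x ↦ sup_{s ∈ S} d(x, s)` of a nonempty bounded set `S` in a complete CAT(0)
space has a unique minimiser, the circumcentre of `S`: the CN inequality at the midpoint of two
almost-minimisers forces them to be close, so minimising sequences are Cauchy. Being canonical,
the circumcentre is fixed by every isometry preserving `S`.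

Take `S` to be the `G₂`-orbit of a `G₁`-fixed point. It is bounded since `G₂` has a fixed
point, `G₂`-invariant, and fixed pointwise by `G₁` because the actions commute; hence both
groups fix its circumcentre.
-/

/-- A complete metric space is CAT(0) (in the sense of Bruhat–Tits) if every pair
of points has a midpoint satisfying the CN comparison inequality. -/
class CAT0Space (X : Type*) [MetricSpace X] : Prop where
  exists_midpoint : ∀ x y : X, ∃ m : X,
    dist x m = dist x y / 2 ∧ dist m y = dist x y / 2 ∧
    ∀ z : X, dist z m ^ 2 ≤ (dist z x ^ 2 + dist z y ^ 2) / 2 - dist x y ^ 2 / 4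

open Set Filter Topology Bornology

noncomputable def circumradius {X : Type*} [PseudoMetricSpace X] (S : Set X) (x : X) : ℝ :=
  sSup (dist x '' S)

section Circumradius

variable {X : Type*} [PseudoMetricSpace X] {S : Set X}

lemma bddAbove_dist_image (hS : IsBounded S) (x : X) : BddAbove (dist x '' S) := by
  obtain ⟨R, hR⟩ := hS.subset_closedBall x
  refine ⟨R, ?_⟩
  rintro _ ⟨s, hs, rfl⟩
  simpa [dist_comm] using hR hs

lemma dist_le_circumradius (hS : IsBounded S) {s : X} (hs : s ∈ S) (x : X) :
    dist x s ≤ circumradius S x :=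
  le_csSup (bddAbove_dist_image hS x) ⟨s, hs, rfl⟩

lemma circumradius_nonneg (hS : IsBounded S) (hne : S.Nonempty) (x : X) :
    0 ≤ circumradius S x :=
  dist_nonneg.trans (dist_le_circumradius hS hne.some_mem x)

lemma circumradius_le (hne : S.Nonempty) {x : X} {r : ℝ} (h : ∀ s ∈ S, dist x s ≤ r) :
    circumradius S x ≤ r :=
  csSup_le (hne.image _) (by rintro _ ⟨s, hs, rfl⟩; exact h s hs)

lemma lipschitzWith_circumradius (hS : IsBounded S) (hne : S.Nonempty) :
    LipschitzWith 1 (circumradius S) :=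
  LipschitzWith.of_le_add fun x y => circumradius_le hne fun s hs =>
    (dist_triangle x y s).trans (by linarith [dist_le_circumradius hS hs y])

lemma circumradius_isometryEquiv_apply (f : X ≃ᵢ X) (hf : f '' S = S) (x : X) :
    circumradius S (f x) = circumradius S x := by
  unfold circumradius
  conv_lhs => rw [← hf, image_image]
  exact congrArg sSup (image_congr fun s _ => f.dist_eq x s)

end Circumradius

namespace CAT0Space

variable {X : Type*} [MetricSpace X] [CAT0Space X] {S : Set X}

theorem exists_circumradius_sq_le (hS : IsBounded S) (hne : S.Nonempty) (x y : X) :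
    ∃ m, circumradius S m ^ 2 ≤
      (circumradius S x ^ 2 + circumradius S y ^ 2) / 2 - dist x y ^ 2 / 4 := by
  obtain ⟨m, -, -, hcn⟩ := exists_midpoint x y
  set B := (circumradius S x ^ 2 + circumradius S y ^ 2) / 2 - dist x y ^ 2 / 4 with hB_def
  have hdist : ∀ s ∈ S, dist m s ^ 2 ≤ B := fun s hs => by
    have hx := pow_le_pow_left₀ dist_nonneg (dist_comm x s ▸ dist_le_circumradius hS hs x) 2
    have hy := pow_le_pow_left₀ dist_nonneg (dist_comm y s ▸ dist_le_circumradius hS hs y) 2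
    linarith [dist_comm m s ▸ hcn s, hB_def]
  have hB : 0 ≤ B := (sq_nonneg _).trans (hdist _ hne.some_mem)
  refine ⟨m, ?_⟩
  calc circumradius S m ^ 2 ≤ √B ^ 2 :=
        pow_le_pow_left₀ (circumradius_nonneg hS hne m) (circumradius_le hne fun s hs =>
          Real.le_sqrt_of_sq_le (hdist s hs)) 2
    _ = B := Real.sq_sqrt hB

theorem dist_sq_le_of_le_circumradius (hS : IsBounded S) (hne : S.Nonempty) {r : ℝ}
    (hr : 0 ≤ r) (hmin : ∀ z, r ≤ circumradius S z) (x y : X) :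
    dist x y ^ 2 ≤ 2 * circumradius S x ^ 2 + 2 * circumradius S y ^ 2 - 4 * r ^ 2 := by
  obtain ⟨m, hm⟩ := exists_circumradius_sq_le hS hne x y
  nlinarith [pow_le_pow_left₀ hr (hmin m) 2]

theorem exists_forall_circumradius_le [CompleteSpace X] (hS : IsBounded S) (hne : S.Nonempty) :
    ∃ c, ∀ x, circumradius S c ≤ circumradius S x := by
  have : Nonempty X := ⟨hne.some⟩
  set F := circumradius S
  have hF0 : 0 ∈ lowerBounds (range F) := forall_mem_range.2 (circumradius_nonneg hS hne)
  have hbdd : BddBelow (range F) := ⟨0, hF0⟩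
  set r := sInf (range F)
  have hr : ∀ x, r ≤ F x := fun x => csInf_le hbdd ⟨x, rfl⟩
  have hr0 : 0 ≤ r := le_csInf (range_nonempty F) hF0
  obtain ⟨v, -, hv, hvF⟩ := exists_seq_tendsto_sInf (range_nonempty F) hbdd
  choose u hu using hvF
  have hFu : Tendsto (F ∘ u) atTop (𝓝 r) := by simpa only [Function.comp_def, hu] using hv
  have hcauchy : CauchySeq u := by
    rw [cauchySeq_iff_tendsto_dist_atTop_0]
    have hbound : Tendsto (fun p : ℕ × ℕ => 2 * F (u p.1) ^ 2 + 2 * F (u p.2) ^ 2 - 4 * r ^ 2)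
        atTop (𝓝 0) := by
      have h₁ : Tendsto (fun p : ℕ × ℕ => F (u p.1)) atTop (𝓝 r) :=
        (hFu.comp tendsto_fst).mono_left prod_atTop_atTop_eq.ge
      have h₂ : Tendsto (fun p : ℕ × ℕ => F (u p.2)) atTop (𝓝 r) :=
        (hFu.comp tendsto_snd).mono_left prod_atTop_atTop_eq.ge
      have hlim := ((h₁.pow 2).const_mul 2).add ((h₂.pow 2).const_mul 2) |>.sub_const (4 * r ^ 2)
      rwa [show 2 * r ^ 2 + 2 * r ^ 2 - 4 * r ^ 2 = 0 by ring] at hlim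
    have hsq := tendsto_of_tendsto_of_tendsto_of_le_of_le tendsto_const_nhds hbound
      (fun p => sq_nonneg _) (fun p => dist_sq_le_of_le_circumradius hS hne hr0 hr (u p.1) (u p.2))
    simpa only [Real.sqrt_sq dist_nonneg, Real.sqrt_zero] using hsq.sqrt
  obtain ⟨c, hc⟩ := cauchySeq_tendsto_of_complete hcauchy
  have hFc : F c = r :=
    tendsto_nhds_unique (((lipschitzWith_circumradius hS hne).continuous.tendsto c).comp hc) hFu
  exact ⟨c, fun x => hFc ▸ hr x⟩

theorem eq_of_forall_circumradius_le (hS : IsBounded S) (hne : S.Nonempty) {c c' : X}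
    (hc : ∀ x, circumradius S c ≤ circumradius S x)
    (hc' : ∀ x, circumradius S c' ≤ circumradius S x) : c = c' := by
  have heq : circumradius S c' = circumradius S c := le_antisymm (hc' c) (hc c')
  have h := dist_sq_le_of_le_circumradius hS hne (circumradius_nonneg hS hne c) hc c c'
  rw [heq] at h
  exact dist_le_zero.mp (by nlinarith [dist_nonneg (x := c) (y := c')])

theorem exists_forall_isometryEquiv_apply_eq [CompleteSpace X] (hS : IsBounded S)
    (hne : S.Nonempty) : ∃ c, ∀ f : X ≃ᵢ X, f '' S = S → f c = c := by
  obtain ⟨c, hc⟩ := exists_forall_circumradius_le hS hne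
  refine ⟨c, fun f hf => eq_of_forall_circumradius_le hS hne ?_ hc⟩
  simpa only [circumradius_isometryEquiv_apply f hf] using hc

end CAT0Space

section Orbit

variable {X : Type*} [PseudoMetricSpace X]

lemma isBounded_range_apply_of_forall_apply_eq {ι : Type*} (f : ι → X ≃ᵢ X) {x₀ : X}
    (hx₀ : ∀ i, f i x₀ = x₀) (x : X) : IsBounded (range fun i => f i x) :=
  (Metric.isBounded_closedBall (x := x₀) (r := dist x x₀)).subset <|
    range_subset_iff.mpr fun i => by rw [Metric.mem_closedBall, ← (f i).dist_eq x x₀, hx₀]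

lemma image_range_apply_eq {G : Type*} [Group G] (φ : G →* X ≃ᵢ X) (g : G) (x : X) :
    φ g '' range (fun h => φ h x) = range fun h => φ h x := by
  rw [← range_comp]
  have hcomp : (φ g ∘ fun h => φ h x) = (fun h => φ h x) ∘ (g * ·) := by
    funext h
    simp [map_mul]
  rw [hcomp, (mul_left_surjective g).range_comp]

end Orbit

/-- If two groups act by isometries on a complete CAT(0) space with elementwise
commuting images and each has a global fixed point, then the product action of
`G₁ × G₂` has a global fixed point. -/
theorem product_action_fixedPoint (X : Type*) [MetricSpace X] [CompleteSpace X]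
    [CAT0Space X] (G₁ G₂ : Type*) [Group G₁] [Group G₂]
    (φ₁ : G₁ →* (X ≃ᵢ X)) (φ₂ : G₂ →* (X ≃ᵢ X))
    (hcomm : ∀ (g₁ : G₁) (g₂ : G₂), ∀ x : X, φ₁ g₁ (φ₂ g₂ x) = φ₂ g₂ (φ₁ g₁ x))
    (h₁ : ∃ x : X, ∀ g : G₁, φ₁ g x = x) (h₂ : ∃ x : X, ∀ g : G₂, φ₂ g x = x) :
    ∃ x : X, ∀ (g₁ : G₁) (g₂ : G₂), φ₁ g₁ (φ₂ g₂ x) = x := by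
  obtain ⟨x₁, hx₁⟩ := h₁
  obtain ⟨x₂, hx₂⟩ := h₂
  obtain ⟨c, hc⟩ := CAT0Space.exists_forall_isometryEquiv_apply_eq
    (isBounded_range_apply_of_forall_apply_eq φ₂ hx₂ x₁) (range_nonempty _)
  have hfix₂ : ∀ g₂ : G₂, φ₂ g₂ c = c := fun g₂ => hc _ (image_range_apply_eq φ₂ g₂ x₁)
  have hfix₁ : ∀ g₁ : G₁, φ₁ g₁ c = c := fun g₁ => hc _ <| EqOn.image_eq_self <| by
    rintro _ ⟨g₂, rfl⟩
    rw [id_eq, hcomm, hx₁]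
  exact ⟨c, fun g₁ g₂ => by rw [hfix₂, hfix₁]⟩
end

section
/- For n ≥ 2, the subgroup of Aut(W_n) generated by {σ_{12}} ∪ {α_{(i,i+1)} : i = 2,...,n-1} is finite. -/
/-!
Each generator fixes `s₁` (index `0` of `Fin n`) and sends every `sₖ` to some `sⱼ` or
`s₁ sⱼ s₁` ("signed permutations" of the generators). Since `s₁` is an involution, the
automorphisms with this property are closed under composition, and there are finitely many of
them because an automorphism of `Wₙ` is determined by the images of the generators. Elements
of a finite submonoid of a group have finite order, so the generated subgroup stays inside it.
-/

open Subgroup in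
theorem Subgroup.closure_finite_of_subset_finite_submonoid {G : Type*} [Group G] {s : Set G}
    {M : Submonoid G} (hM : (M : Set G).Finite) (hs : s ⊆ M) : (closure s : Set G).Finite := by
  have hfin : ∀ x ∈ s, IsOfFinOrder x := fun x hx ↦
    finite_powers.mp (hM.subset (Submonoid.powers_le.mpr (hs hx)))
  have hle : (closure s).toSubmonoid ≤ M := by
    rw [closure_toSubmonoid_of_isOfFinOrder hfin]
    exact Submonoid.closure_le.mpr hs
  exact hM.subset hle

theorem MulAut.injective_domRestrict_of_closure_eq_top {G : Type*} [Group G] {S : Set G}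
    (hS : Subgroup.closure S = ⊤) : Function.Injective fun φ : MulAut G ↦ S.domRestrict φ := by
  intro φ ψ h
  have : φ.toMonoidHom = ψ.toMonoidHom :=
    MonoidHom.eq_of_eqOn_dense hS fun s hs ↦ congrFun h ⟨s, hs⟩
  exact MulEquiv.ext fun g ↦ DFunLike.congr_fun this g

section SignedPermutation

variable {G : Type*} [Group G]

def conjOrSelf (t : G) (S : Set G) : Set G := S ∪ (fun g ↦ t * g * t) '' S

variable {t : G} {S : Set G}

theorem conjOrSelf_finite (hS : S.Finite) : (conjOrSelf t S).Finite :=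
  hS.union (hS.image _)

theorem conj_mem_conjOrSelf (ht : t * t = 1) {g : G} (hg : g ∈ conjOrSelf t S) :
    t * g * t ∈ conjOrSelf t S := by
  rcases hg with hg | ⟨s, hs, rfl⟩
  · exact Or.inr ⟨g, hg, rfl⟩
  · left
    simpa [← mul_assoc, ht, mul_assoc _ t t] using hs

theorem map_mem_conjOrSelf (ht : t * t = 1) {φ : MulAut G} (hφt : φ t = t)
    (hφS : ∀ s ∈ S, φ s ∈ conjOrSelf t S) {g : G} (hg : g ∈ conjOrSelf t S) :
    φ g ∈ conjOrSelf t S := by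
  rcases hg with hg | ⟨s, hs, rfl⟩
  · exact hφS g hg
  · simpa only [map_mul, hφt] using conj_mem_conjOrSelf ht (hφS s hs)

variable (S) in
def signedPermSubmonoid (ht : t * t = 1) : Submonoid (MulAut G) where
  carrier := {φ | φ t = t ∧ ∀ s ∈ S, φ s ∈ conjOrSelf t S}
  one_mem' := ⟨rfl, fun _ hs ↦ Or.inl hs⟩
  mul_mem' := by
    rintro φ ψ ⟨hφt, hφS⟩ ⟨hψt, hψS⟩
    refine ⟨by simp [hφt, hψt], fun s hs ↦ ?_⟩
    exact map_mem_conjOrSelf ht hφt hφS (hψS s hs)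

theorem mem_signedPermSubmonoid {ht : t * t = 1} {φ : MulAut G} :
    φ ∈ signedPermSubmonoid S ht ↔ φ t = t ∧ ∀ s ∈ S, φ s ∈ conjOrSelf t S :=
  Iff.rfl

theorem signedPermSubmonoid_finite (ht : t * t = 1) (hS : S.Finite)
    (hgen : Subgroup.closure S = ⊤) : (signedPermSubmonoid S ht : Set (MulAut G)).Finite := by
  have : Finite S := hS.to_subtype
  refine Set.Finite.of_finite_image ?_ (MulAut.injective_domRestrict_of_closure_eq_top hgen).injOn
  refine (Set.Finite.pi fun _ ↦ conjOrSelf_finite (t := t) hS).subset ?_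
  rintro _ ⟨φ, ⟨-, hφS⟩, rfl⟩ s -
  exact hφS s s.2

end SignedPermutation

theorem ucs_mul_self {n : ℕ} (i : Fin n) : ucs i * ucs i = 1 := by
  have : FreeGroup.of i ^ 2 ∈ Subgroup.normalClosure (univCoxeterRels n) :=
    Subgroup.subset_normalClosure ⟨i, rfl⟩
  rw [← pow_two]
  exact (QuotientGroup.eq_one_iff _).mpr this

theorem closure_range_ucs (n : ℕ) : Subgroup.closure (Set.range (ucs (n := n))) = ⊤ :=
  PresentedGroup.closure_range_of _

/-- For `n ≥ 2`, the subgroup of `Aut(Wₙ)` generated by `σ₁₂` together with the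
adjacent transposition automorphisms `α_{(i,i+1)}` for `i = 2, …, n-1` is finite. -/
theorem aut_univCoxeter_B_subgroup_finite (n : ℕ) (hn : 2 ≤ n)
    (σ₁₂ : MulAut (UnivCoxeterGroup n))
    (hσ₁ : σ₁₂ (ucs ⟨1, by omega⟩) =
      ucs ⟨0, by omega⟩ * ucs ⟨1, by omega⟩ * ucs ⟨0, by omega⟩)
    (hσ₂ : ∀ k : Fin n, k ≠ ⟨1, by omega⟩ → σ₁₂ (ucs k) = ucs k)
    (α : Equiv.Perm (Fin n) →* MulAut (UnivCoxeterGroup n))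
    (hα : ∀ (π : Equiv.Perm (Fin n)) (k : Fin n), α π (ucs k) = ucs (π k)) :
    (Subgroup.closure ({σ₁₂} ∪
      {x | ∃ i : ℕ, ∃ h : 1 ≤ i ∧ i + 2 ≤ n,
        x = α (Equiv.swap ⟨i, by omega⟩ ⟨i + 1, by omega⟩)}) :
      Set (MulAut (UnivCoxeterGroup n))).Finite := by
  refine Subgroup.closure_finite_of_subset_finite_submonoid
    (signedPermSubmonoid_finite (ucs_mul_self ⟨0, by omega⟩) (Set.finite_range _)
      (closure_range_ucs n)) ?_
  rintro φ (rfl | ⟨i, ⟨hi1, hi2⟩, rfl⟩) <;>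
    rw [SetLike.mem_coe, mem_signedPermSubmonoid, Set.forall_mem_range]
  · refine ⟨hσ₂ _ (by simp), fun k ↦ ?_⟩
    by_cases hk : k = ⟨1, by omega⟩
    · subst hk
      exact Or.inr ⟨_, Set.mem_range_self _, hσ₁.symm⟩
    · exact Or.inl ⟨k, (hσ₂ k hk).symm⟩
  · refine ⟨?_, fun k ↦ Or.inl ⟨_, (hα _ k).symm⟩⟩
    rw [hα, Equiv.swap_apply_of_ne_of_ne] <;> (simp only [ne_eq, Fin.mk.injEq]; omega)
end
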